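/- arXiv:2201.06730 — 4 statements merged into one kernel-verified Lean document; each statement's English description precedes it below -/
import Mathlib

section
/- Let 𝒜 ∈ M_{n×n}(ℝ), ℬ₁ ∈ M_{n×m}(ℝ), 𝒞₁ ∈ M_{p×n}(ℝ), 𝒟₁ ∈ M_{p×m}(ℝ) and γ > 0. Suppose there exists a symmetric positive definite matrix 𝒳 ∈ M_{n×n}(ℝ) such that the symmetric block matrix [[𝒳𝒜 + 𝒜ᵀ𝒳 + 𝒞₁ᵀ𝒞₁, 𝒳ℬ₁ + 𝒞₁ᵀ𝒟₁], [ℬ₁ᵀ𝒳 + 𝒟₁ᵀ𝒞₁, 𝒟₁ᵀ𝒟₁ − γ²I]] is negative semidefinite. Then for every T ≥ 0, every continuous input w₁ : ℝ → ℝᵐ, and every differentiable trajectory x : ℝ → ℝⁿ with x(0) = 0 and x′(t) = 𝒜x(t) + ℬ₁w₁(t) for all t ∈ [0,T], the output z₁(t) := 𝒞₁x(t) + 𝒟₁w₁(t) satisfies ∫₀ᵀ ‖z₁(t)‖² dt ≤ γ² ∫₀ᵀ ‖w₁(t)‖² dt. -/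
open Matrix

private theorem key_lemma {n m p : ℕ}
    (𝒜 : Matrix (Fin n) (Fin n) ℝ) (ℬ₁ : Matrix (Fin n) (Fin m) ℝ)
    (𝒞₁ : Matrix (Fin p) (Fin n) ℝ) (𝒟₁ : Matrix (Fin p) (Fin m) ℝ)
    (γ : ℝ)
    (𝒳 : Matrix (Fin n) (Fin n) ℝ)
    (hLMI : (-(Matrix.fromBlocks
        (𝒳 * 𝒜 + 𝒜ᵀ * 𝒳 + 𝒞₁ᵀ * 𝒞₁) (𝒳 * ℬ₁ + 𝒞₁ᵀ * 𝒟₁)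
        (ℬ₁ᵀ * 𝒳 + 𝒟₁ᵀ * 𝒞₁)
        (𝒟₁ᵀ * 𝒟₁ - γ ^ 2 • (1 : Matrix (Fin m) (Fin m) ℝ)))).PosSemidef)
    (a : Fin n → ℝ) (b : Fin m → ℝ) :
    (𝒜 *ᵥ a + ℬ₁ *ᵥ b) ⬝ᵥ (𝒳 *ᵥ a) + a ⬝ᵥ (𝒳 *ᵥ (𝒜 *ᵥ a + ℬ₁ *ᵥ b))
      + (𝒞₁ *ᵥ a + 𝒟₁ *ᵥ b) ⬝ᵥ (𝒞₁ *ᵥ a + 𝒟₁ *ᵥ b)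
      ≤ γ ^ 2 * (b ⬝ᵥ b) := by
  have h := hLMI.dotProduct_mulVec_nonneg (Sum.elim a b)
  simp only [star_trivial, neg_mulVec, dotProduct_neg, fromBlocks_mulVec,
    Matrix.add_mulVec, Matrix.sub_mulVec, Matrix.smul_mulVec, Matrix.one_mulVec,
    sumElim_dotProduct_sumElim, dotProduct_add, dotProduct_sub, dotProduct_smul,
    Sum.elim_comp_inl, Sum.elim_comp_inr, smul_eq_mul] at h
  have e1 : ∀ {q r : ℕ} (M : Matrix (Fin r) (Fin q) ℝ) (u : Fin q → ℝ) (v : Fin r → ℝ),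
      u ⬝ᵥ (Mᵀ *ᵥ v) = (M *ᵥ u) ⬝ᵥ v := by
    intro q r M u v; rw [dotProduct_mulVec, vecMul_transpose]
  have h1 : a ⬝ᵥ (𝒳 * 𝒜) *ᵥ a = a ⬝ᵥ 𝒳 *ᵥ (𝒜 *ᵥ a) := by rw [← Matrix.mulVec_mulVec]
  have h2 : a ⬝ᵥ (𝒜ᵀ * 𝒳) *ᵥ a = (𝒜 *ᵥ a) ⬝ᵥ (𝒳 *ᵥ a) := by
    rw [← Matrix.mulVec_mulVec, e1]
  have h3 : a ⬝ᵥ (𝒞₁ᵀ * 𝒞₁) *ᵥ a = (𝒞₁ *ᵥ a) ⬝ᵥ (𝒞₁ *ᵥ a) := by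
    rw [← Matrix.mulVec_mulVec, e1]
  have h4 : a ⬝ᵥ (𝒳 * ℬ₁) *ᵥ b = a ⬝ᵥ 𝒳 *ᵥ (ℬ₁ *ᵥ b) := by rw [← Matrix.mulVec_mulVec]
  have h5 : a ⬝ᵥ (𝒞₁ᵀ * 𝒟₁) *ᵥ b = (𝒞₁ *ᵥ a) ⬝ᵥ (𝒟₁ *ᵥ b) := by
    rw [← Matrix.mulVec_mulVec, e1]
  have h6 : b ⬝ᵥ (ℬ₁ᵀ * 𝒳) *ᵥ a = (ℬ₁ *ᵥ b) ⬝ᵥ (𝒳 *ᵥ a) := by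
    rw [← Matrix.mulVec_mulVec, e1]
  have h7 : b ⬝ᵥ (𝒟₁ᵀ * 𝒞₁) *ᵥ a = (𝒟₁ *ᵥ b) ⬝ᵥ (𝒞₁ *ᵥ a) := by
    rw [← Matrix.mulVec_mulVec, e1]
  have h8 : b ⬝ᵥ (𝒟₁ᵀ * 𝒟₁) *ᵥ b = (𝒟₁ *ᵥ b) ⬝ᵥ (𝒟₁ *ᵥ b) := by
    rw [← Matrix.mulVec_mulVec, e1]
  have c1 := dotProduct_comm (𝒟₁ *ᵥ b) (𝒞₁ *ᵥ a)
  simp only [Matrix.mulVec_add, dotProduct_add, add_dotProduct]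
  rw [h1, h2, h3, h4, h5, h6, h7, h8] at h
  linarith

/-- the bounded-real-lemma LMI implies H∞ performance level γ
(induced L₂ gain at most γ) for trajectories starting from rest. -/
theorem stmt1 {n m p : ℕ}
    (𝒜 : Matrix (Fin n) (Fin n) ℝ) (ℬ₁ : Matrix (Fin n) (Fin m) ℝ)
    (𝒞₁ : Matrix (Fin p) (Fin n) ℝ) (𝒟₁ : Matrix (Fin p) (Fin m) ℝ)
    (γ : ℝ) (hγ : 0 < γ)
    (𝒳 : Matrix (Fin n) (Fin n) ℝ) (hXpd : 𝒳.PosDef)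
    (hLMI : (-(Matrix.fromBlocks
        (𝒳 * 𝒜 + 𝒜ᵀ * 𝒳 + 𝒞₁ᵀ * 𝒞₁) (𝒳 * ℬ₁ + 𝒞₁ᵀ * 𝒟₁)
        (ℬ₁ᵀ * 𝒳 + 𝒟₁ᵀ * 𝒞₁)
        (𝒟₁ᵀ * 𝒟₁ - γ ^ 2 • (1 : Matrix (Fin m) (Fin m) ℝ)))).PosSemidef)
    (T : ℝ) (hT : 0 ≤ T)
    (w₁ : ℝ → Fin m → ℝ) (hw₁ : Continuous w₁)
    (x : ℝ → Fin n → ℝ) (hx0 : x 0 = 0)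
    (hx' : ∀ t ∈ Set.Icc (0 : ℝ) T, HasDerivAt x (𝒜 *ᵥ x t + ℬ₁ *ᵥ w₁ t) t) :
    ∫ t in (0 : ℝ)..T, ∑ i, ((𝒞₁ *ᵥ x t + 𝒟₁ *ᵥ w₁ t) i) ^ 2
      ≤ γ ^ 2 * ∫ t in (0 : ℝ)..T, ∑ i, (w₁ t i) ^ 2 := by
  set d : ℝ → Fin n → ℝ := fun t => 𝒜 *ᵥ x t + ℬ₁ *ᵥ w₁ t with hd
  set V : ℝ → ℝ := fun t => x t ⬝ᵥ (𝒳 *ᵥ x t) with hV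
  set V' : ℝ → ℝ := fun t => d t ⬝ᵥ (𝒳 *ᵥ x t) + x t ⬝ᵥ (𝒳 *ᵥ d t) with hV'
  -- continuity of x on Icc
  have hcx : ContinuousOn x (Set.Icc 0 T) := fun t ht =>
    ((hx' t ht).continuousAt).continuousWithinAt
  have hcxI : ∀ i, ContinuousOn (fun t => x t i) (Set.Icc 0 T) := fun i =>
    (continuous_apply i).comp_continuousOn hcx
  have hcwI : ∀ i, Continuous (fun t => w₁ t i) := fun i => (continuous_apply i).comp hw₁
  -- derivative of V
  have hVderiv : ∀ t ∈ Set.Icc (0 : ℝ) T, HasDerivAt V (V' t) t := by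
    intro t ht
    have hc : ∀ i, HasDerivAt (fun s => x s i) (d t i) t := fun i =>
      hasDerivAt_pi.1 (hx' t ht) i
    have hsum : HasDerivAt (fun s => ∑ i, x s i * ∑ j, 𝒳 i j * x s j)
        (∑ i, (d t i * ∑ j, 𝒳 i j * x t j + x t i * ∑ j, 𝒳 i j * d t j)) t := by
      apply HasDerivAt.fun_sum
      intro i _
      exact (hc i).mul (HasDerivAt.fun_sum fun j _ => (hc j).const_mul (𝒳 i j))
    have hfun : V = fun s => ∑ i, x s i * ∑ j, 𝒳 i j * x s j := by
      funext s; simp [hV, Matrix.mulVec, dotProduct]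
    have hval : V' t = ∑ i, (d t i * ∑ j, 𝒳 i j * x t j + x t i * ∑ j, 𝒳 i j * d t j) := by
      simp [hV', Matrix.mulVec, dotProduct, Finset.sum_add_distrib]
    rw [hfun, hval]
    exact hsum
  -- continuity helpers
  have hdot : ∀ {q : ℕ} (u v : ℝ → Fin q → ℝ), ContinuousOn u (Set.Icc 0 T) →
      ContinuousOn v (Set.Icc 0 T) →
      ContinuousOn (fun t => u t ⬝ᵥ v t) (Set.Icc 0 T) := by
    intro q u v hu hv
    unfold dotProduct
    exact continuousOn_finset_sum _ fun i _ =>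
      (((continuous_apply i).comp_continuousOn hu)).mul
        ((continuous_apply i).comp_continuousOn hv)
  have hmv : ∀ {q r : ℕ} (M : Matrix (Fin q) (Fin r) ℝ) (u : ℝ → Fin r → ℝ),
      ContinuousOn u (Set.Icc 0 T) →
      ContinuousOn (fun t => M *ᵥ u t) (Set.Icc 0 T) := by
    intro q r M u hu
    apply continuousOn_pi.2
    intro i
    simp only [Matrix.mulVec, dotProduct]
    exact continuousOn_finset_sum _ fun j _ =>
      continuousOn_const.mul ((continuous_apply j).comp_continuousOn hu)
  have hcw : ContinuousOn w₁ (Set.Icc 0 T) := hw₁.continuousOn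
  have hcd : ContinuousOn d (Set.Icc 0 T) := (hmv 𝒜 x hcx).add (hmv ℬ₁ w₁ hcw)
  have hcV' : ContinuousOn V' (Set.Icc 0 T) :=
    (hdot d _ hcd (hmv 𝒳 x hcx)).add (hdot x _ hcx (hmv 𝒳 d hcd))
  -- the integrands
  set F : ℝ → ℝ := fun t => ∑ i, ((𝒞₁ *ᵥ x t + 𝒟₁ *ᵥ w₁ t) i) ^ 2 with hF
  set G : ℝ → ℝ := fun t => ∑ i, (w₁ t i) ^ 2 with hG
  have hFeq : ∀ t, F t = (𝒞₁ *ᵥ x t + 𝒟₁ *ᵥ w₁ t) ⬝ᵥ (𝒞₁ *ᵥ x t + 𝒟₁ *ᵥ w₁ t) := by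
    intro t; simp [hF, dotProduct, sq]
  have hGeq : ∀ t, G t = w₁ t ⬝ᵥ w₁ t := by
    intro t; simp [hG, dotProduct, sq]
  have hcF : ContinuousOn F (Set.Icc 0 T) := by
    have := hdot _ _ ((hmv 𝒞₁ x hcx).add (hmv 𝒟₁ w₁ hcw)) ((hmv 𝒞₁ x hcx).add (hmv 𝒟₁ w₁ hcw))
    exact this.congr fun t _ => hFeq t
  have hcG : Continuous G := continuous_finset_sum _ fun i _ =>
    ((continuous_apply i).comp hw₁).pow 2
  -- pointwise bound: F t ≤ γ^2 * G t - V' t on Icc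
  have hpt : ∀ t ∈ Set.Icc (0 : ℝ) T, F t ≤ γ ^ 2 * G t - V' t := by
    intro t ht
    have := key_lemma 𝒜 ℬ₁ 𝒞₁ 𝒟₁ γ 𝒳 hLMI (x t) (w₁ t)
    rw [hFeq t, hGeq t]
    simp only [hV', hd]
    linarith
  -- integrability
  have hIuIcc : Set.uIcc (0 : ℝ) T = Set.Icc 0 T := Set.uIcc_of_le hT
  have hIV' : IntervalIntegrable V' MeasureTheory.volume 0 T :=
    (hIuIcc ▸ hcV').intervalIntegrable
  have hIF : IntervalIntegrable F MeasureTheory.volume 0 T :=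
    (hIuIcc ▸ hcF).intervalIntegrable
  have hIG : IntervalIntegrable G MeasureTheory.volume 0 T := hcG.intervalIntegrable _ _
  -- FTC
  have hftc : ∫ t in (0 : ℝ)..T, V' t = V T - V 0 :=
    intervalIntegral.integral_eq_sub_of_hasDerivAt (fun t ht => hVderiv t (hIuIcc ▸ ht)) hIV'
  have hV0 : V 0 = 0 := by simp [hV, hx0]
  have hVT : 0 ≤ V T := by
    have := hXpd.posSemidef.dotProduct_mulVec_nonneg (x T)
    simpa using this
  -- monotone integral
  have hmono : ∫ t in (0 : ℝ)..T, F t ≤ ∫ t in (0 : ℝ)..T, (γ ^ 2 * G t - V' t) :=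
    intervalIntegral.integral_mono_on hT hIF ((hIG.const_mul _).sub hIV') hpt
  have hsplit : ∫ t in (0 : ℝ)..T, (γ ^ 2 * G t - V' t)
      = γ ^ 2 * (∫ t in (0 : ℝ)..T, G t) - ∫ t in (0 : ℝ)..T, V' t := by
    rw [intervalIntegral.integral_sub (hIG.const_mul _) hIV',
      intervalIntegral.integral_const_mul]
  calc ∫ t in (0 : ℝ)..T, F t ≤ _ := hmono
    _ = γ ^ 2 * (∫ t in (0 : ℝ)..T, G t) - (V T - V 0) := by rw [hsplit, hftc]
    _ ≤ γ ^ 2 * ∫ t in (0 : ℝ)..T, G t := by rw [hV0]; linarith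
end

section
/- Let A ∈ M_{n×n}(ℝ), B₁ ∈ M_{n×m₁}(ℝ), B ∈ M_{n×m}(ℝ), C₁ ∈ M_{p₁×n}(ℝ), D₁ ∈ M_{p₁×m₁}(ℝ), E₁ ∈ M_{p₁×m}(ℝ), C ∈ M_{p×n}(ℝ), F₁ ∈ M_{p×m₁}(ℝ), γ > 0, X ∈ M_{n×n}(ℝ) symmetric positive semidefinite, and Z ∈ M_{(p+m)×(p+m)}(ℝ) symmetric, and suppose the symmetric matrix [[XA + AᵀX, XB₁, XB], [B₁ᵀX, −I, 0], [BᵀX, 0, 0]] + (1/γ²)·[C₁ D₁ E₁]ᵀ[C₁ D₁ E₁] + [[C, F₁, 0], [0, 0, I]]ᵀ Z [[C, F₁, 0], [0, 0, I]] is negative semidefinite. Then the agent is dissipative with storage function V(x) = xᵀXx: for every t₀ ≤ t₁, every continuous inputs w₁ : ℝ → ℝ^{m₁}, w : ℝ → ℝᵐ, and every differentiable x : ℝ → ℝⁿ with x′(t) = Ax(t) + B₁w₁(t) + Bw(t) on [t₀, t₁], setting z₁(t) := C₁x(t) + D₁w₁(t) + E₁w(t) and z(t) := Cx(t) + F₁w₁(t),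 one has x(t₁)ᵀXx(t₁) ≤ x(t₀)ᵀXx(t₀) + ∫_{t₀}^{t₁} ( ‖w₁(t)‖² − (1/γ²)‖z₁(t)‖² − [z(t); w(t)]ᵀ Z [z(t); w(t)] ) dt. -/
open Matrix

private lemma contMulVec {ι κ : Type*} [Fintype κ] (M : Matrix ι κ ℝ) :
    Continuous fun v : κ → ℝ => M *ᵥ v :=
  continuous_const.matrix_mulVec continuous_id

private lemma contOnDot {ι : Type*} [Fintype ι] {f g : ℝ → ι → ℝ} {s : Set ℝ}
    (hf : ContinuousOn f s) (hg : ContinuousOn g s) :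
    ContinuousOn (fun t => f t ⬝ᵥ g t) s := by
  simp only [dotProduct]
  exact continuousOn_finset_sum _ fun i _ =>
    ((continuous_apply i).comp_continuousOn hf).mul ((continuous_apply i).comp_continuousOn hg)

private theorem key {n m₁ m p₁ p : ℕ}
    (A : Matrix (Fin n) (Fin n) ℝ) (B₁ : Matrix (Fin n) (Fin m₁) ℝ)
    (B : Matrix (Fin n) (Fin m) ℝ) (C₁ : Matrix (Fin p₁) (Fin n) ℝ)
    (D₁ : Matrix (Fin p₁) (Fin m₁) ℝ) (E₁ : Matrix (Fin p₁) (Fin m) ℝ)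
    (C : Matrix (Fin p) (Fin n) ℝ) (F₁ : Matrix (Fin p) (Fin m₁) ℝ)
    (γ : ℝ)
    (X : Matrix (Fin n) (Fin n) ℝ)
    (Z : Matrix (Fin p ⊕ Fin m) (Fin p ⊕ Fin m) ℝ)
    (hLMI : (-(Matrix.fromBlocks (X * A + Aᵀ * X)
          (Matrix.fromCols (X * B₁) (X * B))
          (Matrix.fromRows (B₁ᵀ * X) (Bᵀ * X))
          (Matrix.fromBlocks (-1 : Matrix (Fin m₁) (Fin m₁) ℝ) 0 0
            (0 : Matrix (Fin m) (Fin m) ℝ))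
        + (1 / γ ^ 2) •
          ((Matrix.fromCols C₁ (Matrix.fromCols D₁ E₁))ᵀ *
            Matrix.fromCols C₁ (Matrix.fromCols D₁ E₁))
        + (Matrix.fromRows
            (Matrix.fromCols C (Matrix.fromCols F₁ (0 : Matrix (Fin p) (Fin m) ℝ)))
            (Matrix.fromCols (0 : Matrix (Fin m) (Fin n) ℝ)
              (Matrix.fromCols (0 : Matrix (Fin m) (Fin m₁) ℝ)
                (1 : Matrix (Fin m) (Fin m) ℝ))))ᵀ * Z *
          Matrix.fromRows
            (Matrix.fromCols C (Matrix.fromCols F₁ (0 : Matrix (Fin p) (Fin m) ℝ)))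
            (Matrix.fromCols (0 : Matrix (Fin m) (Fin n) ℝ)
              (Matrix.fromCols (0 : Matrix (Fin m) (Fin m₁) ℝ)
                (1 : Matrix (Fin m) (Fin m) ℝ))))).PosSemidef)
    (a : Fin n → ℝ) (b : Fin m₁ → ℝ) (c : Fin m → ℝ) :
    (A *ᵥ a + B₁ *ᵥ b + B *ᵥ c) ⬝ᵥ (X *ᵥ a) + a ⬝ᵥ (X *ᵥ (A *ᵥ a + B₁ *ᵥ b + B *ᵥ c)) ≤
      b ⬝ᵥ b - (1 / γ ^ 2) * ((C₁ *ᵥ a + D₁ *ᵥ b + E₁ *ᵥ c) ⬝ᵥ (C₁ *ᵥ a + D₁ *ᵥ b + E₁ *ᵥ c))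
        - Sum.elim (C *ᵥ a + F₁ *ᵥ b) c ⬝ᵥ (Z *ᵥ Sum.elim (C *ᵥ a + F₁ *ᵥ b) c) := by
  have h := hLMI.dotProduct_mulVec_nonneg (Sum.elim a (Sum.elim b c))
  rw [← sub_nonneg]
  convert h using 1
  · rfl
  simp only [star_trivial, neg_mulVec, dotProduct_neg, add_mulVec, smul_mulVec,
    dotProduct_add, dotProduct_smul, fromBlocks_mulVec, fromRows_mulVec, Sum.elim_comp_inl,
    Sum.elim_comp_inr, fromCols_mulVec_sumElim, sumElim_dotProduct_sumElim,
    ← mulVec_mulVec, zero_mulVec, one_mulVec, add_zero, zero_add,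
    dotProduct_mulVec _ (_ᵀ), vecMul_transpose, smul_eq_mul]
  simp only [dotProduct_add, dotProduct_neg, dotProduct_zero, dotProduct_smul, smul_eq_mul,
    sumElim_dotProduct_sumElim, mulVec_add, add_dotProduct]
  ring

/-- the distributed-performance LMI implies dissipativity of the
agent with storage function `V(x) = xᵀXx` and supply
`‖w₁‖² − (1/γ²)‖z₁‖² − [z;w]ᵀ Z [z;w]`. Negative semidefiniteness of `M` is
expressed as positive semidefiniteness of `-M`. -/
theorem stmt3 {n m₁ m p₁ p : ℕ}
    (A : Matrix (Fin n) (Fin n) ℝ) (B₁ : Matrix (Fin n) (Fin m₁) ℝ)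
    (B : Matrix (Fin n) (Fin m) ℝ) (C₁ : Matrix (Fin p₁) (Fin n) ℝ)
    (D₁ : Matrix (Fin p₁) (Fin m₁) ℝ) (E₁ : Matrix (Fin p₁) (Fin m) ℝ)
    (C : Matrix (Fin p) (Fin n) ℝ) (F₁ : Matrix (Fin p) (Fin m₁) ℝ)
    (γ : ℝ) (hγ : 0 < γ)
    (X : Matrix (Fin n) (Fin n) ℝ) (hXpsd : X.PosSemidef)
    (Z : Matrix (Fin p ⊕ Fin m) (Fin p ⊕ Fin m) ℝ) (hZs : Z.IsSymm)
    (hLMI : (-(Matrix.fromBlocks (X * A + Aᵀ * X)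
          (Matrix.fromCols (X * B₁) (X * B))
          (Matrix.fromRows (B₁ᵀ * X) (Bᵀ * X))
          (Matrix.fromBlocks (-1 : Matrix (Fin m₁) (Fin m₁) ℝ) 0 0
            (0 : Matrix (Fin m) (Fin m) ℝ))
        + (1 / γ ^ 2) •
          ((Matrix.fromCols C₁ (Matrix.fromCols D₁ E₁))ᵀ *
            Matrix.fromCols C₁ (Matrix.fromCols D₁ E₁))
        + (Matrix.fromRows
            (Matrix.fromCols C (Matrix.fromCols F₁ (0 : Matrix (Fin p) (Fin m) ℝ)))
            (Matrix.fromCols (0 : Matrix (Fin m) (Fin n) ℝ)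
              (Matrix.fromCols (0 : Matrix (Fin m) (Fin m₁) ℝ)
                (1 : Matrix (Fin m) (Fin m) ℝ))))ᵀ * Z *
          Matrix.fromRows
            (Matrix.fromCols C (Matrix.fromCols F₁ (0 : Matrix (Fin p) (Fin m) ℝ)))
            (Matrix.fromCols (0 : Matrix (Fin m) (Fin n) ℝ)
              (Matrix.fromCols (0 : Matrix (Fin m) (Fin m₁) ℝ)
                (1 : Matrix (Fin m) (Fin m) ℝ))))).PosSemidef)
    (t₀ t₁ : ℝ) (ht : t₀ ≤ t₁)
    (w₁ : ℝ → Fin m₁ → ℝ) (hw₁ : Continuous w₁)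
    (w : ℝ → Fin m → ℝ) (hw : Continuous w)
    (x : ℝ → Fin n → ℝ)
    (hx' : ∀ t ∈ Set.Icc t₀ t₁,
      HasDerivAt x (A *ᵥ x t + B₁ *ᵥ w₁ t + B *ᵥ w t) t) :
    x t₁ ⬝ᵥ (X *ᵥ x t₁) ≤ x t₀ ⬝ᵥ (X *ᵥ x t₀) +
      ∫ t in t₀..t₁,
        (∑ i, (w₁ t i) ^ 2
          - (1 / γ ^ 2) * ∑ i, ((C₁ *ᵥ x t + D₁ *ᵥ w₁ t + E₁ *ᵥ w t) i) ^ 2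
          - Sum.elim (C *ᵥ x t + F₁ *ᵥ w₁ t) (w t) ⬝ᵥ
              (Z *ᵥ Sum.elim (C *ᵥ x t + F₁ *ᵥ w₁ t) (w t))) := by
  set g : ℝ → Fin n → ℝ := fun t => A *ᵥ x t + B₁ *ᵥ w₁ t + B *ᵥ w t with hg
  set V' : ℝ → ℝ := fun t => g t ⬝ᵥ (X *ᵥ x t) + x t ⬝ᵥ (X *ᵥ g t) with hV'
  set S : ℝ → ℝ := fun t =>
      ∑ i, (w₁ t i) ^ 2
        - (1 / γ ^ 2) * ∑ i, ((C₁ *ᵥ x t + D₁ *ᵥ w₁ t + E₁ *ᵥ w t) i) ^ 2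
        - Sum.elim (C *ᵥ x t + F₁ *ᵥ w₁ t) (w t) ⬝ᵥ
            (Z *ᵥ Sum.elim (C *ᵥ x t + F₁ *ᵥ w₁ t) (w t)) with hS
  -- continuity facts
  have hxc : ContinuousOn x (Set.Icc t₀ t₁) := fun t htm =>
    ((hx' t htm).continuousAt).continuousWithinAt
  have hgc : ContinuousOn g (Set.Icc t₀ t₁) :=
    (((contMulVec A).comp_continuousOn hxc).add
      (((contMulVec B₁).comp hw₁).continuousOn)).add (((contMulVec B).comp hw).continuousOn)
  have hXxc : ContinuousOn (fun t => X *ᵥ x t) (Set.Icc t₀ t₁) :=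
    (contMulVec X).comp_continuousOn hxc
  have hXgc : ContinuousOn (fun t => X *ᵥ g t) (Set.Icc t₀ t₁) :=
    (contMulVec X).comp_continuousOn hgc
  have hV'c : ContinuousOn V' (Set.Icc t₀ t₁) :=
    (contOnDot hgc hXxc).add (contOnDot hxc hXgc)
  have hz₁c : ContinuousOn (fun t => C₁ *ᵥ x t + D₁ *ᵥ w₁ t + E₁ *ᵥ w t) (Set.Icc t₀ t₁) :=
    (((contMulVec C₁).comp_continuousOn hxc).add
      (((contMulVec D₁).comp hw₁).continuousOn)).add (((contMulVec E₁).comp hw).continuousOn)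
  have hzc : ContinuousOn (fun t => C *ᵥ x t + F₁ *ᵥ w₁ t) (Set.Icc t₀ t₁) :=
    ((contMulVec C).comp_continuousOn hxc).add (((contMulVec F₁).comp hw₁).continuousOn)
  have huc : ContinuousOn (fun t => Sum.elim (C *ᵥ x t + F₁ *ᵥ w₁ t) (w t)) (Set.Icc t₀ t₁) := by
    refine continuousOn_pi.2 fun i => ?_
    cases i with
    | inl i =>
        simpa [Function.comp_def] using (continuous_apply i).comp_continuousOn hzc
    | inr i =>
        simpa [Function.comp_def] using ((continuous_apply i).comp hw).continuousOn
  have hSc : ContinuousOn S (Set.Icc t₀ t₁) := by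
    refine ContinuousOn.sub (ContinuousOn.sub ?_ ?_) ?_
    · exact (continuous_finset_sum _ fun i _ =>
        ((continuous_apply i).comp hw₁).pow 2).continuousOn
    · exact continuousOn_const.mul (continuousOn_finset_sum _ fun i _ =>
        ((continuous_apply i).comp_continuousOn hz₁c).pow 2)
    · exact contOnDot huc ((contMulVec Z).comp_continuousOn huc)
  -- the derivative of the storage function
  have hVd : ∀ t ∈ Set.Icc t₀ t₁,
      HasDerivAt (fun s => x s ⬝ᵥ (X *ᵥ x s)) (V' t) t := by
    intro t htm
    have h1 : HasDerivAt (fun s => ∑ i, x s i * ∑ j, X i j * x s j)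
        (∑ i, (g t i * ∑ j, X i j * x t j + x t i * ∑ j, X i j * g t j)) t := by
      refine HasDerivAt.fun_sum fun i _ => ?_
      exact (hasDerivAt_pi.1 (hx' t htm) i).mul
        (HasDerivAt.fun_sum fun j _ => (hasDerivAt_pi.1 (hx' t htm) j).const_mul (X i j))
    convert h1 using 1
    simp [hV', dotProduct, mulVec, Finset.sum_add_distrib]
    show g t ⬝ᵥ (X *ᵥ x t) + x t ⬝ᵥ (X *ᵥ g t) = _
    simp [dotProduct, mulVec, Finset.sum_add_distrib]
  -- pointwise supply bound
  have hle : ∀ t ∈ Set.Icc t₀ t₁, V' t ≤ S t := by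
    intro t htm
    have hk := key A B₁ B C₁ D₁ E₁ C F₁ γ X Z hLMI (x t) (w₁ t) (w t)
    have e1 : ∑ i, (w₁ t i) ^ 2 = w₁ t ⬝ᵥ w₁ t := by simp [dotProduct, sq]
    have e2 : ∑ i, ((C₁ *ᵥ x t + D₁ *ᵥ w₁ t + E₁ *ᵥ w t) i) ^ 2 =
        (C₁ *ᵥ x t + D₁ *ᵥ w₁ t + E₁ *ᵥ w t) ⬝ᵥ (C₁ *ᵥ x t + D₁ *ᵥ w₁ t + E₁ *ᵥ w t) := by
      simp [dotProduct, sq]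
    simp only [hS, hV', hg, e1, e2]
    exact hk
  -- integrability
  have hiV : IntervalIntegrable V' MeasureTheory.volume t₀ t₁ := by
    apply ContinuousOn.intervalIntegrable
    rwa [Set.uIcc_of_le ht]
  have hiS : IntervalIntegrable S MeasureTheory.volume t₀ t₁ := by
    apply ContinuousOn.intervalIntegrable
    rwa [Set.uIcc_of_le ht]
  -- FTC
  have hftc : ∫ t in t₀..t₁, V' t =
      x t₁ ⬝ᵥ (X *ᵥ x t₁) - x t₀ ⬝ᵥ (X *ᵥ x t₀) := by
    apply intervalIntegral.integral_eq_sub_of_hasDerivAt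
    · intro t htm
      exact hVd t (by rwa [Set.uIcc_of_le ht] at htm)
    · exact hiV
  have hmono : ∫ t in t₀..t₁, V' t ≤ ∫ t in t₀..t₁, S t :=
    intervalIntegral.integral_mono_on ht hiV hiS hle
  rw [hftc] at hmono
  have : ∫ t in t₀..t₁,
        (∑ i, (w₁ t i) ^ 2
          - (1 / γ ^ 2) * ∑ i, ((C₁ *ᵥ x t + D₁ *ᵥ w₁ t + E₁ *ᵥ w t) i) ^ 2
          - Sum.elim (C *ᵥ x t + F₁ *ᵥ w₁ t) (w t) ⬝ᵥ
              (Z *ᵥ Sum.elim (C *ᵥ x t + F₁ *ᵥ w₁ t) (w t))) = ∫ t in t₀..t₁, S t := rfl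
  rw [this]
  linarith
end

section
/- (Theorem 1, statement 1.) Fix N ≥ 1, γ > 0, and an adjacency matrix Υ ∈ M_{N×N}(ℝ). For each i = 1,…,N let agent i have matrices Aᵢ ∈ M_{nᵢ×nᵢ}(ℝ), B₁ᵢ ∈ M_{nᵢ×m₁}(ℝ), Bᵢ ∈ M_{nᵢ×1}(ℝ), C₁ᵢ ∈ M_{p₁×nᵢ}(ℝ), D₁ᵢ ∈ M_{p₁×m₁}(ℝ), E₁ᵢ ∈ M_{p₁×1}(ℝ), Cᵢ ∈ M_{1×nᵢ}(ℝ), F₁ᵢ ∈ M_{1×m₁}(ℝ) (scalar spatial ports). Suppose for each i there exist a symmetric positive definite Xᵢ ∈ M_{nᵢ×nᵢ}(ℝ) and a symmetric Zᵢ ∈ M_{2×2}(ℝ) such that the symmetric matrix [[XᵢAᵢ + AᵢᵀXᵢ, XᵢB₁ᵢ, XᵢBᵢ], [B₁ᵢᵀXᵢ, −I, 0], [BᵢᵀXᵢ, 0, 0]] + (1/γ²)·[C₁ᵢ D₁ᵢ E₁ᵢ]ᵀ[C₁ᵢ D₁ᵢ E₁ᵢ] + [[Cᵢ, F₁ᵢ,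 0], [0, 0, 1]]ᵀ Zᵢ [[Cᵢ, F₁ᵢ, 0], [0, 0, 1]] is negative semidefinite, and suppose the neutrality condition holds: for every ζ ∈ ℝᴺ, Σᵢ [ζᵢ; (Υζ)ᵢ]ᵀ Zᵢ [ζᵢ; (Υζ)ᵢ] = 0. Then the interconnected cooperative system has induced L₂ gain at most γ: for every T ≥ 0, all continuous inputs w₁ᵢ : ℝ → ℝ^{m₁}, and all differentiable trajectories xᵢ : ℝ → ℝ^{nᵢ} with xᵢ(0) = 0 satisfying zᵢ(t) = Cᵢxᵢ(t) + F₁ᵢw₁ᵢ(t), w(t) = Υz(t), xᵢ′(t) = Aᵢxᵢ(t) + B₁ᵢw₁ᵢ(t) + Bᵢwᵢ(t), z₁ᵢ(t) = C₁ᵢxᵢ(t) + D₁ᵢw₁ᵢ(t) + E₁ᵢwᵢ(t) on [0,T], one has Σᵢ ∫₀ᵀ ‖z₁ᵢ(t)‖² dt ≤ γ² Σᵢ ∫₀ᵀ ‖w₁ᵢ(t)‖² dt. -/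
open Matrix
private lemma stmt4_quad_deriv {n : ℕ} (M : Matrix (Fin n) (Fin n) ℝ) {f : ℝ → Fin n → ℝ}
    {f' : Fin n → ℝ} {t : ℝ} (hf : HasDerivAt f f' t) :
    HasDerivAt (fun s => f s ⬝ᵥ (M *ᵥ f s)) (f' ⬝ᵥ (M *ᵥ f t) + f t ⬝ᵥ (M *ᵥ f')) t := by
  have h := hasDerivAt_pi.mp hf
  simp only [dotProduct, mulVec]
  rw [← Finset.sum_add_distrib]
  exact HasDerivAt.fun_sum fun j _ =>
    (h j).mul (HasDerivAt.fun_sum fun k _ => (h k).const_mul (M j k))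
private lemma stmt4_mulVec_contOn {k l : ℕ} (M : Matrix (Fin k) (Fin l) ℝ) {f : ℝ → Fin l → ℝ}
    {s : Set ℝ} (hf : ∀ j, ContinuousOn (fun t => f t j) s) (j : Fin k) :
    ContinuousOn (fun t => (M *ᵥ f t) j) s := by
  simp only [mulVec, dotProduct]
  exact continuousOn_finset_sum _ fun i _ => continuousOn_const.mul (hf i)
private lemma stmt4_sum_split {N : ℕ} (dd uu zz s : Fin N → ℝ) (c : ℝ)
    (h : ∀ i, dd i - uu i + c * zz i + s i ≤ 0) (hs : ∑ i, s i = 0) :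
    ∑ i, dd i ≤ ∑ i, (uu i - c * zz i) := by
  have h2 : ∑ i, (dd i - uu i + c * zz i + s i) ≤ 0 :=
    Finset.sum_nonpos fun i _ => h i
  have h3 : ∑ i, (dd i - uu i + c * zz i + s i)
      = (∑ i, dd i) - (∑ i, (uu i - c * zz i)) + ∑ i, s i := by
    have he : ∀ i : Fin N, dd i - uu i + c * zz i + s i
        = (dd i - (uu i - c * zz i)) + s i := fun i => by ring
    simp only [he, Finset.sum_add_distrib, Finset.sum_sub_distrib]
  rw [h3, hs, add_zero] at h2
  linarith
private lemma stmt4_expand {n m₁ p₁ : ℕ} (γ : ℝ)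
    (A : Matrix (Fin n) (Fin n) ℝ) (B₁ : Matrix (Fin n) (Fin m₁) ℝ)
    (B : Matrix (Fin n) (Fin 1) ℝ) (C₁ : Matrix (Fin p₁) (Fin n) ℝ)
    (D₁ : Matrix (Fin p₁) (Fin m₁) ℝ) (E₁ : Matrix (Fin p₁) (Fin 1) ℝ)
    (C : Matrix (Fin 1) (Fin n) ℝ) (F₁ : Matrix (Fin 1) (Fin m₁) ℝ)
    (X : Matrix (Fin n) (Fin n) ℝ) (Z : Matrix (Fin 1 ⊕ Fin 1) (Fin 1 ⊕ Fin 1) ℝ)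
    (ξ : Fin n → ℝ) (u : Fin m₁ → ℝ) (ω : Fin 1 → ℝ) :
    (Sum.elim ξ (Sum.elim u ω)) ⬝ᵥ
      ((Matrix.fromBlocks (X * A + Aᵀ * X)
          (Matrix.fromCols (X * B₁) (X * B))
          (Matrix.fromRows (B₁ᵀ * X) (Bᵀ * X))
          (Matrix.fromBlocks (-1 : Matrix (Fin m₁) (Fin m₁) ℝ) 0 0
            (0 : Matrix (Fin 1) (Fin 1) ℝ))
        + (1 / γ ^ 2) •
          ((Matrix.fromCols C₁ (Matrix.fromCols D₁ E₁))ᵀ *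
            Matrix.fromCols C₁ (Matrix.fromCols D₁ E₁))
        + (Matrix.fromRows
            (Matrix.fromCols C (Matrix.fromCols F₁ (0 : Matrix (Fin 1) (Fin 1) ℝ)))
            (Matrix.fromCols (0 : Matrix (Fin 1) (Fin n) ℝ)
              (Matrix.fromCols (0 : Matrix (Fin 1) (Fin m₁) ℝ)
                (1 : Matrix (Fin 1) (Fin 1) ℝ))))ᵀ * Z *
          Matrix.fromRows
            (Matrix.fromCols C (Matrix.fromCols F₁ (0 : Matrix (Fin 1) (Fin 1) ℝ)))
            (Matrix.fromCols (0 : Matrix (Fin 1) (Fin n) ℝ)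
              (Matrix.fromCols (0 : Matrix (Fin 1) (Fin m₁) ℝ)
                (1 : Matrix (Fin 1) (Fin 1) ℝ)))) *ᵥ (Sum.elim ξ (Sum.elim u ω)))
    = ((A *ᵥ ξ + B₁ *ᵥ u + B *ᵥ ω) ⬝ᵥ (X *ᵥ ξ) + ξ ⬝ᵥ (X *ᵥ (A *ᵥ ξ + B₁ *ᵥ u + B *ᵥ ω)))
      - u ⬝ᵥ u
      + (1 / γ ^ 2) * ((C₁ *ᵥ ξ + D₁ *ᵥ u + E₁ *ᵥ ω) ⬝ᵥ (C₁ *ᵥ ξ + D₁ *ᵥ u + E₁ *ᵥ ω))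
      + (Sum.elim (C *ᵥ ξ + F₁ *ᵥ u) ω) ⬝ᵥ (Z *ᵥ Sum.elim (C *ᵥ ξ + F₁ *ᵥ u) ω) := by
  have dpt : ∀ {k l : Type} [Fintype k] [Fintype l] (M : Matrix k l ℝ) (a : l → ℝ) (y : k → ℝ),
      a ⬝ᵥ (Mᵀ *ᵥ y) = (M *ᵥ a) ⬝ᵥ y := by
    intro k l _ _ M a y
    rw [Matrix.dotProduct_mulVec, Matrix.vecMul_transpose]
  simp only [Matrix.add_mulVec, Matrix.smul_mulVec, ← Matrix.mulVec_mulVec,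
    Matrix.fromBlocks_mulVec, Matrix.fromCols_mulVec_sumElim, Matrix.fromRows_mulVec,
    Matrix.zero_mulVec, Matrix.one_mulVec, Matrix.neg_mulVec, add_zero, zero_add,
    Matrix.mulVec_add, dotProduct_add, dotProduct_smul,
    sumElim_dotProduct_sumElim, dpt, dotProduct_neg, smul_eq_mul,
    Sum.elim_comp_inl, Sum.elim_comp_inr, add_dotProduct, dotProduct_zero]
  ring
/-- Theorem 1, statement 1: if each agent satisfies the
distributed LMI with interconnection supply matrix `Zᵢ` and the supply
functions are neutral with respect to the adjacency matrix `Υ`, then the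
interconnected cooperative system has induced L₂ gain at most `γ`.
Negative semidefiniteness of `M` is expressed as `(-M).PosSemidef`. -/
theorem stmt4 {N m₁ p₁ : ℕ} (hN : 1 ≤ N) (γ : ℝ) (hγ : 0 < γ)
    (Υ : Matrix (Fin N) (Fin N) ℝ)
    (n : Fin N → ℕ)
    (A : ∀ i, Matrix (Fin (n i)) (Fin (n i)) ℝ)
    (B₁ : ∀ i, Matrix (Fin (n i)) (Fin m₁) ℝ)
    (B : ∀ i, Matrix (Fin (n i)) (Fin 1) ℝ)
    (C₁ : ∀ i, Matrix (Fin p₁) (Fin (n i)) ℝ)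
    (D₁ : ∀ _i : Fin N, Matrix (Fin p₁) (Fin m₁) ℝ)
    (E₁ : ∀ _i : Fin N, Matrix (Fin p₁) (Fin 1) ℝ)
    (C : ∀ i, Matrix (Fin 1) (Fin (n i)) ℝ)
    (F₁ : ∀ _i : Fin N, Matrix (Fin 1) (Fin m₁) ℝ)
    (X : ∀ i, Matrix (Fin (n i)) (Fin (n i)) ℝ)
    (Z : ∀ _i : Fin N, Matrix (Fin 1 ⊕ Fin 1) (Fin 1 ⊕ Fin 1) ℝ)
    (hXpd : ∀ i, (X i).PosDef)
    (hZs : ∀ i, (Z i).IsSymm)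
    (hLMI : ∀ i, (-(Matrix.fromBlocks (X i * A i + (A i)ᵀ * X i)
          (Matrix.fromCols (X i * B₁ i) (X i * B i))
          (Matrix.fromRows ((B₁ i)ᵀ * X i) ((B i)ᵀ * X i))
          (Matrix.fromBlocks (-1 : Matrix (Fin m₁) (Fin m₁) ℝ) 0 0
            (0 : Matrix (Fin 1) (Fin 1) ℝ))
        + (1 / γ ^ 2) •
          ((Matrix.fromCols (C₁ i) (Matrix.fromCols (D₁ i) (E₁ i)))ᵀ *
            Matrix.fromCols (C₁ i) (Matrix.fromCols (D₁ i) (E₁ i)))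
        + (Matrix.fromRows
            (Matrix.fromCols (C i)
              (Matrix.fromCols (F₁ i) (0 : Matrix (Fin 1) (Fin 1) ℝ)))
            (Matrix.fromCols (0 : Matrix (Fin 1) (Fin (n i)) ℝ)
              (Matrix.fromCols (0 : Matrix (Fin 1) (Fin m₁) ℝ)
                (1 : Matrix (Fin 1) (Fin 1) ℝ))))ᵀ * Z i *
          Matrix.fromRows
            (Matrix.fromCols (C i)
              (Matrix.fromCols (F₁ i) (0 : Matrix (Fin 1) (Fin 1) ℝ)))
            (Matrix.fromCols (0 : Matrix (Fin 1) (Fin (n i)) ℝ)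
              (Matrix.fromCols (0 : Matrix (Fin 1) (Fin m₁) ℝ)
                (1 : Matrix (Fin 1) (Fin 1) ℝ))))).PosSemidef)
    (hneutral : ∀ ζ : Fin N → ℝ,
      ∑ i, (Sum.elim (fun _ : Fin 1 => ζ i) (fun _ : Fin 1 => (Υ *ᵥ ζ) i)) ⬝ᵥ
        (Z i *ᵥ Sum.elim (fun _ : Fin 1 => ζ i) (fun _ : Fin 1 => (Υ *ᵥ ζ) i)) = 0)
    (T : ℝ) (hT : 0 ≤ T)
    (w₁ : ∀ _i : Fin N, ℝ → Fin m₁ → ℝ) (hw₁ : ∀ i, Continuous (w₁ i))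
    (x : ∀ i, ℝ → Fin (n i) → ℝ) (hx0 : ∀ i, x i 0 = 0)
    (z w : ℝ → Fin N → ℝ)
    (hz : ∀ t i, z t i = (C i *ᵥ x i t + F₁ i *ᵥ w₁ i t) 0)
    (hw : ∀ t, w t = Υ *ᵥ z t)
    (hx' : ∀ i, ∀ t ∈ Set.Icc (0 : ℝ) T,
      HasDerivAt (x i)
        (A i *ᵥ x i t + B₁ i *ᵥ w₁ i t + B i *ᵥ fun _ : Fin 1 => w t i) t) :
    ∑ i, ∫ t in (0 : ℝ)..T,
        ∑ j, ((C₁ i *ᵥ x i t + D₁ i *ᵥ w₁ i t + E₁ i *ᵥ fun _ : Fin 1 => w t i) j) ^ 2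
      ≤ γ ^ 2 * ∑ i, ∫ t in (0 : ℝ)..T, ∑ j, (w₁ i t j) ^ 2 := by
  have hγ2 : (0:ℝ) < γ ^ 2 := by positivity
  set xd : ∀ _i : Fin N, ℝ → Fin (n _i) → ℝ :=
    fun i t => A i *ᵥ x i t + B₁ i *ᵥ w₁ i t + B i *ᵥ fun _ : Fin 1 => w t i with hxd
  set z₁ : Fin N → ℝ → Fin p₁ → ℝ :=
    fun i t => C₁ i *ᵥ x i t + D₁ i *ᵥ w₁ i t + E₁ i *ᵥ fun _ : Fin 1 => w t i with hz₁
  set Φ : ℝ → ℝ := fun t => ∑ i, x i t ⬝ᵥ (X i *ᵥ x i t) with hΦ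
  set Dv : ℝ → ℝ :=
    fun t => ∑ i, (xd i t ⬝ᵥ (X i *ᵥ x i t) + x i t ⬝ᵥ (X i *ᵥ xd i t)) with hDv
  set g : ℝ → ℝ :=
    fun t => ∑ i, (w₁ i t ⬝ᵥ w₁ i t - 1 / γ ^ 2 * (z₁ i t ⬝ᵥ z₁ i t)) with hg
  have huIcc : Set.uIcc (0:ℝ) T = Set.Icc 0 T := Set.uIcc_of_le hT
  -- continuity facts
  have hxc : ∀ i, ContinuousOn (x i) (Set.Icc 0 T) :=
    fun i t ht => (hx' i t ht).continuousAt.continuousWithinAt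
  have hxjc : ∀ i j, ContinuousOn (fun t => x i t j) (Set.Icc 0 T) :=
    fun i j => (continuous_apply j).comp_continuousOn (hxc i)
  have hw₁jc : ∀ i j, ContinuousOn (fun t => w₁ i t j) (Set.Icc 0 T) :=
    fun i j => ((continuous_apply j).comp (hw₁ i)).continuousOn
  have hzc : ∀ i, ContinuousOn (fun t => z t i) (Set.Icc 0 T) := by
    intro i
    have he : (fun t => z t i)
        = fun t => (C i *ᵥ x i t) 0 + (F₁ i *ᵥ w₁ i t) 0 := by
      funext t; rw [hz t i]; simp
    rw [he]
    exact (stmt4_mulVec_contOn (C i) (hxjc i) 0).add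
      (stmt4_mulVec_contOn (F₁ i) (hw₁jc i) 0)
  have hwc : ∀ i, ContinuousOn (fun t => w t i) (Set.Icc 0 T) := by
    intro i
    have he : (fun t => w t i) = fun t => ∑ j, Υ i j * z t j := by
      funext t; rw [hw t]; simp [mulVec, dotProduct]
    rw [he]
    exact continuousOn_finset_sum _ fun j _ => continuousOn_const.mul (hzc j)
  have hxdjc : ∀ i j, ContinuousOn (fun t => xd i t j) (Set.Icc 0 T) := by
    intro i j
    simp only [hxd, Pi.add_apply]
    exact ((stmt4_mulVec_contOn (A i) (hxjc i) j).add
      (stmt4_mulVec_contOn (B₁ i) (hw₁jc i) j)).add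
      (stmt4_mulVec_contOn (B i) (fun _ => hwc i) j)
  have hz₁jc : ∀ i j, ContinuousOn (fun t => z₁ i t j) (Set.Icc 0 T) := by
    intro i j
    simp only [hz₁, Pi.add_apply]
    exact ((stmt4_mulVec_contOn (C₁ i) (hxjc i) j).add
      (stmt4_mulVec_contOn (D₁ i) (hw₁jc i) j)).add
      (stmt4_mulVec_contOn (E₁ i) (fun _ => hwc i) j)
  have hDvc : ContinuousOn Dv (Set.Icc 0 T) := by
    rw [hDv]
    refine continuousOn_finset_sum _ fun i _ => ContinuousOn.add ?_ ?_ <;>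
      simp only [dotProduct, mulVec] <;>
      refine continuousOn_finset_sum _ fun j _ => ContinuousOn.mul ?_
        (continuousOn_finset_sum _ fun k _ => continuousOn_const.mul ?_)
    · exact hxdjc i j
    · exact hxjc i k
    · exact hxjc i j
    · exact hxdjc i k
  have hq1c : ∀ i, ContinuousOn (fun t => z₁ i t ⬝ᵥ z₁ i t) (Set.Icc 0 T) := by
    intro i
    simp only [dotProduct]
    exact continuousOn_finset_sum _ fun j _ => (hz₁jc i j).mul (hz₁jc i j)
  have hquc : ∀ i, ContinuousOn (fun t => w₁ i t ⬝ᵥ w₁ i t) (Set.Icc 0 T) := by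
    intro i
    simp only [dotProduct]
    exact continuousOn_finset_sum _ fun j _ => (hw₁jc i j).mul (hw₁jc i j)
  have hgc : ContinuousOn g (Set.Icc 0 T) := by
    rw [hg]
    exact continuousOn_finset_sum _ fun i _ =>
      (hquc i).sub (continuousOn_const.mul (hq1c i))
  have hDvint : IntervalIntegrable Dv MeasureTheory.volume 0 T :=
    (huIcc ▸ hDvc).intervalIntegrable
  have hgint : IntervalIntegrable g MeasureTheory.volume 0 T :=
    (huIcc ▸ hgc).intervalIntegrable
  have hq1int : ∀ i, IntervalIntegrable (fun t => z₁ i t ⬝ᵥ z₁ i t)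
      MeasureTheory.volume 0 T := fun i => (huIcc ▸ hq1c i).intervalIntegrable
  have hquint : ∀ i, IntervalIntegrable (fun t => w₁ i t ⬝ᵥ w₁ i t)
      MeasureTheory.volume 0 T := fun i => (huIcc ▸ hquc i).intervalIntegrable
  -- derivative of the storage function
  have hΦ' : ∀ t ∈ Set.Icc (0:ℝ) T, HasDerivAt Φ (Dv t) t := by
    intro t ht
    simp only [hΦ, hDv, hxd]
    exact HasDerivAt.fun_sum fun i _ => stmt4_quad_deriv (X i) (hx' i t ht)
  have hFTC : ∫ t in (0:ℝ)..T, Dv t = Φ T - Φ 0 :=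
    intervalIntegral.integral_eq_sub_of_hasDerivAt
      (fun t ht => hΦ' t (huIcc ▸ ht)) hDvint
  -- pointwise dissipation inequality
  have hDg : ∀ t ∈ Set.Icc (0:ℝ) T, Dv t ≤ g t := by
    intro t _
    have key : ∀ i : Fin N,
        ((A i *ᵥ x i t + B₁ i *ᵥ w₁ i t + B i *ᵥ fun _ : Fin 1 => w t i) ⬝ᵥ (X i *ᵥ x i t)
          + x i t ⬝ᵥ (X i *ᵥ (A i *ᵥ x i t + B₁ i *ᵥ w₁ i t + B i *ᵥ fun _ : Fin 1 => w t i)))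
        - w₁ i t ⬝ᵥ w₁ i t
        + 1 / γ ^ 2 * ((C₁ i *ᵥ x i t + D₁ i *ᵥ w₁ i t + E₁ i *ᵥ fun _ : Fin 1 => w t i) ⬝ᵥ
            (C₁ i *ᵥ x i t + D₁ i *ᵥ w₁ i t + E₁ i *ᵥ fun _ : Fin 1 => w t i))
        + (Sum.elim (fun _ : Fin 1 => z t i) (fun _ : Fin 1 => w t i)) ⬝ᵥ
            (Z i *ᵥ Sum.elim (fun _ : Fin 1 => z t i) (fun _ : Fin 1 => w t i)) ≤ 0 := by
      intro i
      have h0 := (hLMI i).dotProduct_mulVec_nonneg (Sum.elim (x i t) (Sum.elim (w₁ i t) (fun _ : Fin 1 => w t i)))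
      simp only [star_trivial, Matrix.neg_mulVec, dotProduct_neg, neg_nonneg] at h0
      have hexp := stmt4_expand γ (A i) (B₁ i) (B i) (C₁ i) (D₁ i) (E₁ i) (C i) (F₁ i)
        (X i) (Z i) (x i t) (w₁ i t) (fun _ : Fin 1 => w t i)
      have hzi : C i *ᵥ x i t + F₁ i *ᵥ w₁ i t = fun _ : Fin 1 => z t i := by
        funext j
        have hj : j = 0 := Subsingleton.elim j 0
        rw [hj, hz t i]
      rw [hzi] at hexp
      rw [hexp] at h0
      exact h0
    have hneut := hneutral (z t)
    rw [← hw t] at hneut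
    simp only [hDv, hg, hz₁, hxd]
    exact stmt4_sum_split
      (fun i => (A i *ᵥ x i t + B₁ i *ᵥ w₁ i t + B i *ᵥ fun _ : Fin 1 => w t i) ⬝ᵥ (X i *ᵥ x i t)
        + x i t ⬝ᵥ (X i *ᵥ (A i *ᵥ x i t + B₁ i *ᵥ w₁ i t + B i *ᵥ fun _ : Fin 1 => w t i)))
      (fun i => w₁ i t ⬝ᵥ w₁ i t)
      (fun i => (C₁ i *ᵥ x i t + D₁ i *ᵥ w₁ i t + E₁ i *ᵥ fun _ : Fin 1 => w t i) ⬝ᵥ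
          (C₁ i *ᵥ x i t + D₁ i *ᵥ w₁ i t + E₁ i *ᵥ fun _ : Fin 1 => w t i))
      (fun i => (Sum.elim (fun _ : Fin 1 => z t i) (fun _ : Fin 1 => w t i)) ⬝ᵥ
          (Z i *ᵥ Sum.elim (fun _ : Fin 1 => z t i) (fun _ : Fin 1 => w t i)))
      (1 / γ ^ 2) key hneut
  have hmono : ∫ t in (0:ℝ)..T, Dv t ≤ ∫ t in (0:ℝ)..T, g t :=
    intervalIntegral.integral_mono_on hT hDvint hgint hDg
  have hΦ0 : Φ 0 = 0 := by
    simp only [hΦ]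
    refine Finset.sum_eq_zero fun i _ => ?_
    rw [hx0 i]
    simp
  have hΦT : 0 ≤ Φ T := by
    simp only [hΦ]
    refine Finset.sum_nonneg fun i _ => ?_
    simpa using (hXpd i).posSemidef.dotProduct_mulVec_nonneg (x i T)
  rw [hFTC, hΦ0, sub_zero] at hmono
  have h0g : 0 ≤ ∫ t in (0:ℝ)..T, g t := le_trans hΦT hmono
  -- split the integral of g
  have hgsplit : ∫ t in (0:ℝ)..T, g t
      = (∑ i, ∫ t in (0:ℝ)..T, w₁ i t ⬝ᵥ w₁ i t)
        - 1 / γ ^ 2 * ∑ i, ∫ t in (0:ℝ)..T, z₁ i t ⬝ᵥ z₁ i t := by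
    simp only [hg]
    rw [intervalIntegral.integral_finset_sum
      (fun i _ => (hquint i).sub ((hq1int i).const_mul (1 / γ ^ 2)))]
    rw [Finset.mul_sum, ← Finset.sum_sub_distrib]
    refine Finset.sum_congr rfl fun i _ => ?_
    rw [intervalIntegral.integral_sub (hquint i) ((hq1int i).const_mul (1 / γ ^ 2)),
      intervalIntegral.integral_const_mul]
  rw [hgsplit] at h0g
  -- rewrite the goal in terms of z₁ and conclude
  have hdp : ∀ i (t : ℝ),
      (∑ j, ((C₁ i *ᵥ x i t + D₁ i *ᵥ w₁ i t + E₁ i *ᵥ fun _ : Fin 1 => w t i) j) ^ 2)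
        = z₁ i t ⬝ᵥ z₁ i t := by
    intro i t
    simp only [hz₁, dotProduct, sq]
  have hdpu : ∀ i (t : ℝ), (∑ j, (w₁ i t j) ^ 2) = w₁ i t ⬝ᵥ w₁ i t := by
    intro i t
    simp only [dotProduct, sq]
  simp only [hdp, hdpu]
  set Sz := ∑ i, ∫ t in (0:ℝ)..T, z₁ i t ⬝ᵥ z₁ i t with hSz
  set Su := ∑ i, ∫ t in (0:ℝ)..T, w₁ i t ⬝ᵥ w₁ i t with hSu
  have hle : 1 / γ ^ 2 * Sz ≤ Su := by linarith
  calc Sz = γ ^ 2 * (1 / γ ^ 2 * Sz) := by field_simp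
    _ ≤ γ ^ 2 * Su := mul_le_mul_of_nonneg_left hle hγ2.le
end

section
/- (Lemma 1: performance of the modified cooperative system with the synthetic communication agent.) Fix N ≥ 1, γ > 0, and an adjacency matrix Υ ∈ M_{N×N}(ℝ). For each i = 1,…,N let agent i have matrices Aᵢ, B₁ᵢ, Bᵢ, C₁ᵢ, D₁ᵢ, E₁ᵢ, Cᵢ, F₁ᵢ with scalar spatial ports as in the cooperative-system setup. Suppose: (a) for each i there exist a symmetric positive definite Xᵢ and a symmetric Zᵢ ∈ M_{2×2}(ℝ) such that the symmetric matrix [[XᵢAᵢ + AᵢᵀXᵢ, XᵢB₁ᵢ, XᵢBᵢ], [B₁ᵢᵀXᵢ, −I, 0], [BᵢᵀXᵢ, 0, 0]] + (1/γ²)·[C₁ᵢ D₁ᵢ E₁ᵢ]ᵀ[C₁ᵢ D₁ᵢ E₁ᵢ] + [[Cᵢ, F₁ᵢ, 0], [0, 0, 1]]ᵀ Zᵢ [[Cᵢ, F₁ᵢ, 0], [0, 0, 1]] is negative semidefinite; (b) there exists a symmetric Z^c ∈ M_{2N×2N}(ℝ) such that for all v, u ∈ ℝᴺ: (1/γ²)‖Υv‖²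 − ‖v‖² + [Υu; u]ᵀ Z^c [Υu; u] ≤ 0; and (c) neutrality of the ideal interconnections: for all ζ ∈ ℝᴺ, Σᵢ [ζᵢ; (Υζ)ᵢ]ᵀ Zᵢ [ζᵢ; (Υζ)ᵢ] + [Υζ; ζ]ᵀ Z^c [Υζ; ζ] = 0. Then for every T ≥ 0, all continuous inputs w₁ᵢ : ℝ → ℝ^{m₁} and ᶜw₁ : ℝ → ℝᴺ, and all differentiable trajectories xᵢ with xᵢ(0) = 0 satisfying zᵢ(t) = Cᵢxᵢ(t) + F₁ᵢw₁ᵢ(t), w(t) = Υz(t), xᵢ′(t) = Aᵢxᵢ(t) + B₁ᵢw₁ᵢ(t) + Bᵢwᵢ(t), z₁ᵢ(t) = C₁ᵢxᵢ(t) + D₁ᵢw₁ᵢ(t) + E₁ᵢwᵢ(t) on [0,T], one has Σᵢ ∫₀ᵀ ‖z₁ᵢ(t)‖² dt + ∫₀ᵀ ‖Υ·ᶜw₁(t)‖² dt ≤ γ² ( Σᵢ ∫₀ᵀ ‖w₁ᵢ(t)‖² dt + ∫₀ᵀ ‖ᶜw₁(t)‖² dt ). -/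
open Matrix

section helpers

lemma neg_psd_quad {n : Type*} [Fintype n] {M : Matrix n n ℝ} (h : (-M).PosSemidef)
    (x : n → ℝ) : x ⬝ᵥ (M *ᵥ x) ≤ 0 := by
  have := h.dotProduct_mulVec_nonneg x
  simp [Matrix.neg_mulVec] at this
  linarith

lemma psd_quad_nonneg {n : Type*} [Fintype n] {M : Matrix n n ℝ} (h : M.PosSemidef)
    (x : n → ℝ) : 0 ≤ x ⬝ᵥ (M *ᵥ x) := by
  have := h.dotProduct_mulVec_nonneg x
  simpa using this

lemma contOn_entry {s : Set ℝ} {q r : ℕ} (M : Matrix (Fin q) (Fin r) ℝ) {g : ℝ → Fin r → ℝ}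
    (hg : ∀ k, ContinuousOn (fun t => g t k) s) (j : Fin q) :
    ContinuousOn (fun t => (M *ᵥ g t) j) s := by
  simp only [Matrix.mulVec, dotProduct]
  exact continuousOn_finset_sum _ fun k _ => (continuousOn_const.mul (hg k))

end helpers


lemma hasDerivAt_quadForm {n : ℕ} (X : Matrix (Fin n) (Fin n) ℝ) (hX : Xᵀ = X)
    {f : ℝ → Fin n → ℝ} {f' : Fin n → ℝ} {t : ℝ} (hf : HasDerivAt f f' t) :
    HasDerivAt (fun s => f s ⬝ᵥ (X *ᵥ f s)) (2 * (f t ⬝ᵥ (X *ᵥ f'))) t := by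
  have hcomp : ∀ j, HasDerivAt (fun s => f s j) (f' j) t := fun j => (hasDerivAt_pi.mp hf) j
  have h1 : HasDerivAt (fun s => ∑ j, f s j * ∑ k, X j k * f s k)
      (∑ j, (f' j * ∑ k, X j k * f t k + f t j * ∑ k, X j k * f' k)) t := by
    refine HasDerivAt.fun_sum fun j _ => ?_
    exact (hcomp j).mul (HasDerivAt.fun_sum fun k _ => (hcomp k).const_mul (X j k))
  have hval : (∑ j, (f' j * ∑ k, X j k * f t k + f t j * ∑ k, X j k * f' k))
      = 2 * (f t ⬝ᵥ (X *ᵥ f')) := by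
    have hs : f' ⬝ᵥ (X *ᵥ f t) = f t ⬝ᵥ (X *ᵥ f') := by
      rw [Matrix.dotProduct_mulVec f', ← hX, Matrix.vecMul_transpose, hX, dotProduct_comm]
    simp only [Finset.sum_add_distrib]
    have e1 : (∑ j, f' j * ∑ k, X j k * f t k) = f' ⬝ᵥ (X *ᵥ f t) := by
      simp [dotProduct, Matrix.mulVec]
    have e2 : (∑ j, f t j * ∑ k, X j k * f' k) = f t ⬝ᵥ (X *ᵥ f') := by
      simp [dotProduct, Matrix.mulVec]
    rw [e1, e2, hs]; ring
  rw [hval] at h1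
  convert h1 using 1
  funext s; rfl

lemma dot_symmX {n k : Type*} [Fintype n] [Fintype k] (X : Matrix n n ℝ) (hX : Xᵀ = X)
    (M : Matrix n k ℝ) (x : n → ℝ) (u : k → ℝ) :
    u ⬝ᵥ ((Mᵀ * X) *ᵥ x) = x ⬝ᵥ ((X * M) *ᵥ u) := by
  rw [← Matrix.mulVec_mulVec, ← Matrix.mulVec_mulVec, Matrix.dotProduct_mulVec u, Matrix.vecMul_transpose,
    Matrix.dotProduct_mulVec x, ← hX, Matrix.vecMul_transpose, hX]
  exact dotProduct_comm _ _

lemma agent_diss {n m p : ℕ} {γ : ℝ} (hγ : 0 < γ)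
    (A : Matrix (Fin n) (Fin n) ℝ) (B₁ : Matrix (Fin n) (Fin m) ℝ) (B : Matrix (Fin n) (Fin 1) ℝ)
    (C₁ : Matrix (Fin p) (Fin n) ℝ) (D₁ : Matrix (Fin p) (Fin m) ℝ) (E₁ : Matrix (Fin p) (Fin 1) ℝ)
    (C : Matrix (Fin 1) (Fin n) ℝ) (F₁ : Matrix (Fin 1) (Fin m) ℝ)
    (X : Matrix (Fin n) (Fin n) ℝ) (hX : Xᵀ = X)
    (Z : Matrix (Fin 1 ⊕ Fin 1) (Fin 1 ⊕ Fin 1) ℝ)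
    (hLMI : (-(Matrix.fromBlocks (X * A + Aᵀ * X)
          (Matrix.fromCols (X * B₁) (X * B))
          (Matrix.fromRows (B₁ᵀ * X) (Bᵀ * X))
          (Matrix.fromBlocks (-1 : Matrix (Fin m) (Fin m) ℝ) 0 0
            (0 : Matrix (Fin 1) (Fin 1) ℝ))
        + (1 / γ ^ 2) •
          ((Matrix.fromCols C₁ (Matrix.fromCols D₁ E₁))ᵀ *
            Matrix.fromCols C₁ (Matrix.fromCols D₁ E₁))
        + (Matrix.fromRows
            (Matrix.fromCols C (Matrix.fromCols F₁ (0 : Matrix (Fin 1) (Fin 1) ℝ)))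
            (Matrix.fromCols (0 : Matrix (Fin 1) (Fin n) ℝ)
              (Matrix.fromCols (0 : Matrix (Fin 1) (Fin m) ℝ)
                (1 : Matrix (Fin 1) (Fin 1) ℝ))))ᵀ * Z *
          Matrix.fromRows
            (Matrix.fromCols C (Matrix.fromCols F₁ (0 : Matrix (Fin 1) (Fin 1) ℝ)))
            (Matrix.fromCols (0 : Matrix (Fin 1) (Fin n) ℝ)
              (Matrix.fromCols (0 : Matrix (Fin 1) (Fin m) ℝ)
                (1 : Matrix (Fin 1) (Fin 1) ℝ))))).PosSemidef)
    (x : Fin n → ℝ) (u : Fin m → ℝ) (v : Fin 1 → ℝ) :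
    2 * (x ⬝ᵥ (X *ᵥ (A *ᵥ x + B₁ *ᵥ u + B *ᵥ v)))
      + (1 / γ ^ 2) * ∑ j, ((C₁ *ᵥ x + D₁ *ᵥ u + E₁ *ᵥ v) j) ^ 2
      - ∑ j, (u j) ^ 2
      + Sum.elim (fun _ : Fin 1 => (C *ᵥ x + F₁ *ᵥ u) 0) (fun _ : Fin 1 => v 0) ⬝ᵥ
        (Z *ᵥ Sum.elim (fun _ : Fin 1 => (C *ᵥ x + F₁ *ᵥ u) 0) (fun _ : Fin 1 => v 0)) ≤ 0 := by
  classical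
  set η : (Fin n ⊕ (Fin m ⊕ Fin 1)) → ℝ := Sum.elim x (Sum.elim u v) with hη
  have h0 := neg_psd_quad hLMI η
  -- name the three matrices
  set M₁ := Matrix.fromBlocks (X * A + Aᵀ * X)
          (Matrix.fromCols (X * B₁) (X * B))
          (Matrix.fromRows (B₁ᵀ * X) (Bᵀ * X))
          (Matrix.fromBlocks (-1 : Matrix (Fin m) (Fin m) ℝ) 0 0
            (0 : Matrix (Fin 1) (Fin 1) ℝ)) with hM₁
  set R := Matrix.fromCols C₁ (Matrix.fromCols D₁ E₁) with hR
  set S := Matrix.fromRows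
            (Matrix.fromCols C (Matrix.fromCols F₁ (0 : Matrix (Fin 1) (Fin 1) ℝ)))
            (Matrix.fromCols (0 : Matrix (Fin 1) (Fin n) ℝ)
              (Matrix.fromCols (0 : Matrix (Fin 1) (Fin m) ℝ)
                (1 : Matrix (Fin 1) (Fin 1) ℝ))) with hS
  have hsplit : η ⬝ᵥ ((M₁ + (1 / γ ^ 2) • (Rᵀ * R) + Sᵀ * Z * S) *ᵥ η)
      = η ⬝ᵥ (M₁ *ᵥ η) + (1 / γ ^ 2) * (η ⬝ᵥ ((Rᵀ * R) *ᵥ η)) + η ⬝ᵥ ((Sᵀ * Z * S) *ᵥ η) := by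
    simp [Matrix.add_mulVec, dotProduct_add, Matrix.smul_mulVec, dotProduct_smul,
      smul_eq_mul]
  -- term 2
  have hRη : R *ᵥ η = C₁ *ᵥ x + (D₁ *ᵥ u + E₁ *ᵥ v) := by
    rw [hR, hη, Matrix.fromCols_mulVec_sumElim, Matrix.fromCols_mulVec_sumElim]
  have hT2 : η ⬝ᵥ ((Rᵀ * R) *ᵥ η) = ∑ j, ((C₁ *ᵥ x + D₁ *ᵥ u + E₁ *ᵥ v) j) ^ 2 := by
    rw [← Matrix.mulVec_mulVec, Matrix.dotProduct_mulVec, Matrix.vecMul_transpose, hRη]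
    simp [dotProduct, sq, add_assoc]
  -- term 3
  have hSη : S *ᵥ η = Sum.elim (fun _ : Fin 1 => (C *ᵥ x + F₁ *ᵥ u) 0) (fun _ : Fin 1 => v 0) := by
    rw [hS, hη, Matrix.fromRows_mulVec, Matrix.fromCols_mulVec_sumElim,
      Matrix.fromCols_mulVec_sumElim, Matrix.fromCols_mulVec_sumElim,
      Matrix.fromCols_mulVec_sumElim]
    simp only [Matrix.zero_mulVec, Matrix.one_mulVec, add_zero, zero_add]
    funext j
    cases j with
    | inl j => simp [Subsingleton.elim j 0]
    | inr j => simp [Subsingleton.elim j 0]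
  have hT3 : η ⬝ᵥ ((Sᵀ * Z * S) *ᵥ η)
      = Sum.elim (fun _ : Fin 1 => (C *ᵥ x + F₁ *ᵥ u) 0) (fun _ : Fin 1 => v 0) ⬝ᵥ
        (Z *ᵥ Sum.elim (fun _ : Fin 1 => (C *ᵥ x + F₁ *ᵥ u) 0) (fun _ : Fin 1 => v 0)) := by
    rw [Matrix.mul_assoc, ← Matrix.mulVec_mulVec, Matrix.dotProduct_mulVec, Matrix.vecMul_transpose,
      hSη, ← Matrix.mulVec_mulVec, hSη]
  -- term 1
  have hT1 : η ⬝ᵥ (M₁ *ᵥ η) = 2 * (x ⬝ᵥ (X *ᵥ (A *ᵥ x + B₁ *ᵥ u + B *ᵥ v))) - ∑ j, (u j) ^ 2 := by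
    rw [hM₁, hη, Matrix.fromBlocks_mulVec, sumElim_dotProduct_sumElim]
    simp only [Sum.elim_comp_inl, Sum.elim_comp_inr]
    rw [Matrix.fromCols_mulVec_sumElim, Matrix.fromRows_mulVec, Matrix.fromBlocks_mulVec]
    simp only [Sum.elim_comp_inl, Sum.elim_comp_inr]
    rw [Matrix.add_mulVec]
    simp only [Matrix.zero_mulVec, Matrix.neg_mulVec, Matrix.one_mulVec, add_zero, zero_add]
    simp only [dotProduct_add, sumElim_dotProduct_sumElim,
      dotProduct_zero]
    have h1 : x ⬝ᵥ ((Aᵀ * X) *ᵥ x) = x ⬝ᵥ ((X * A) *ᵥ x) := dot_symmX X hX A x x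
    have h2 : u ⬝ᵥ ((B₁ᵀ * X) *ᵥ x) = x ⬝ᵥ ((X * B₁) *ᵥ u) := dot_symmX X hX B₁ x u
    have h3 : v ⬝ᵥ ((Bᵀ * X) *ᵥ x) = x ⬝ᵥ ((X * B) *ᵥ v) := dot_symmX X hX B x v
    have h4 : u ⬝ᵥ (-u) = -∑ j, (u j) ^ 2 := by simp [dotProduct, sq]
    have h5 : x ⬝ᵥ (X *ᵥ (A *ᵥ x + B₁ *ᵥ u + B *ᵥ v))
        = x ⬝ᵥ ((X * A) *ᵥ x) + x ⬝ᵥ ((X * B₁) *ᵥ u) + x ⬝ᵥ ((X * B) *ᵥ v) := by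
      rw [Matrix.mulVec_add, Matrix.mulVec_add, dotProduct_add, dotProduct_add,
        Matrix.mulVec_mulVec, Matrix.mulVec_mulVec, Matrix.mulVec_mulVec]
    rw [h1, h2, h3, h4]
    rw [h5]; ring
  rw [hsplit, hT1, hT2, hT3] at h0
  linarith

lemma scale_ineq {γ a b c : ℝ} (hγ2 : 0 < γ ^ 2) (h : 1 / γ ^ 2 * a - b + c ≤ 0) :
    a - γ ^ 2 * b + γ ^ 2 * c ≤ 0 := by
  have h2 := mul_le_mul_of_nonneg_left h hγ2.le
  have he : γ ^ 2 * (1 / γ ^ 2 * a - b + c) = a - γ ^ 2 * b + γ ^ 2 * c := by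
    rw [mul_add, mul_sub, ← mul_assoc, mul_one_div_cancel hγ2.ne', one_mul]
  rw [mul_zero, he] at h2
  exact h2

set_option maxHeartbeats 1000000 in
/-- Lemma 1: performance of the modified cooperative system with
the synthetic static communication agent `ᶜG` (spatial channel `ᶜz = Υ ᶜw`,
performance channel `ᶜz₁ = Υ ᶜw₁`), under the agents' LMIs, the communication
agent's MI and neutrality of the ideal interconnections.
Negative semidefiniteness of `M` is expressed as `(-M).PosSemidef`. -/
theorem stmt5 {N m₁ p₁ : ℕ} (hN : 1 ≤ N) (γ : ℝ) (hγ : 0 < γ)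
    (Υ : Matrix (Fin N) (Fin N) ℝ)
    (n : Fin N → ℕ)
    (A : ∀ i, Matrix (Fin (n i)) (Fin (n i)) ℝ)
    (B₁ : ∀ i, Matrix (Fin (n i)) (Fin m₁) ℝ)
    (B : ∀ i, Matrix (Fin (n i)) (Fin 1) ℝ)
    (C₁ : ∀ i, Matrix (Fin p₁) (Fin (n i)) ℝ)
    (D₁ : ∀ _i : Fin N, Matrix (Fin p₁) (Fin m₁) ℝ)
    (E₁ : ∀ _i : Fin N, Matrix (Fin p₁) (Fin 1) ℝ)
    (C : ∀ i, Matrix (Fin 1) (Fin (n i)) ℝ)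
    (F₁ : ∀ _i : Fin N, Matrix (Fin 1) (Fin m₁) ℝ)
    (X : ∀ i, Matrix (Fin (n i)) (Fin (n i)) ℝ)
    (Z : ∀ _i : Fin N, Matrix (Fin 1 ⊕ Fin 1) (Fin 1 ⊕ Fin 1) ℝ)
    (Zc : Matrix (Fin N ⊕ Fin N) (Fin N ⊕ Fin N) ℝ)
    (hXpd : ∀ i, (X i).PosDef)
    (hZs : ∀ i, (Z i).IsSymm)
    (hZcs : Zc.IsSymm)
    -- (a) the agents' LMIs
    (hLMI : ∀ i, (-(Matrix.fromBlocks (X i * A i + (A i)ᵀ * X i)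
          (Matrix.fromCols (X i * B₁ i) (X i * B i))
          (Matrix.fromRows ((B₁ i)ᵀ * X i) ((B i)ᵀ * X i))
          (Matrix.fromBlocks (-1 : Matrix (Fin m₁) (Fin m₁) ℝ) 0 0
            (0 : Matrix (Fin 1) (Fin 1) ℝ))
        + (1 / γ ^ 2) •
          ((Matrix.fromCols (C₁ i) (Matrix.fromCols (D₁ i) (E₁ i)))ᵀ *
            Matrix.fromCols (C₁ i) (Matrix.fromCols (D₁ i) (E₁ i)))
        + (Matrix.fromRows
            (Matrix.fromCols (C i)
              (Matrix.fromCols (F₁ i) (0 : Matrix (Fin 1) (Fin 1) ℝ)))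
            (Matrix.fromCols (0 : Matrix (Fin 1) (Fin (n i)) ℝ)
              (Matrix.fromCols (0 : Matrix (Fin 1) (Fin m₁) ℝ)
                (1 : Matrix (Fin 1) (Fin 1) ℝ))))ᵀ * Z i *
          Matrix.fromRows
            (Matrix.fromCols (C i)
              (Matrix.fromCols (F₁ i) (0 : Matrix (Fin 1) (Fin 1) ℝ)))
            (Matrix.fromCols (0 : Matrix (Fin 1) (Fin (n i)) ℝ)
              (Matrix.fromCols (0 : Matrix (Fin 1) (Fin m₁) ℝ)
                (1 : Matrix (Fin 1) (Fin 1) ℝ))))).PosSemidef)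
    -- (b) the communication agent's matrix inequality
    (hMIc : ∀ v u : Fin N → ℝ,
      (1 / γ ^ 2) * (∑ i, ((Υ *ᵥ v) i) ^ 2) - ∑ i, (v i) ^ 2
        + Sum.elim (Υ *ᵥ u) u ⬝ᵥ (Zc *ᵥ Sum.elim (Υ *ᵥ u) u) ≤ 0)
    -- (c) neutrality of the ideal interconnections
    (hneutral : ∀ ζ : Fin N → ℝ,
      (∑ i, (Sum.elim (fun _ : Fin 1 => ζ i) (fun _ : Fin 1 => (Υ *ᵥ ζ) i)) ⬝ᵥ
        (Z i *ᵥ Sum.elim (fun _ : Fin 1 => ζ i) (fun _ : Fin 1 => (Υ *ᵥ ζ) i)))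
        + Sum.elim (Υ *ᵥ ζ) ζ ⬝ᵥ (Zc *ᵥ Sum.elim (Υ *ᵥ ζ) ζ) = 0)
    (T : ℝ) (hT : 0 ≤ T)
    (w₁ : ∀ _i : Fin N, ℝ → Fin m₁ → ℝ) (hw₁ : ∀ i, Continuous (w₁ i))
    (cw₁ : ℝ → Fin N → ℝ) (hcw₁ : Continuous cw₁)
    (x : ∀ i, ℝ → Fin (n i) → ℝ) (hx0 : ∀ i, x i 0 = 0)
    (z w : ℝ → Fin N → ℝ)
    (hz : ∀ t i, z t i = (C i *ᵥ x i t + F₁ i *ᵥ w₁ i t) 0)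
    (hw : ∀ t, w t = Υ *ᵥ z t)
    (hx' : ∀ i, ∀ t ∈ Set.Icc (0 : ℝ) T,
      HasDerivAt (x i)
        (A i *ᵥ x i t + B₁ i *ᵥ w₁ i t + B i *ᵥ fun _ : Fin 1 => w t i) t) :
    (∑ i, ∫ t in (0 : ℝ)..T,
        ∑ j, ((C₁ i *ᵥ x i t + D₁ i *ᵥ w₁ i t + E₁ i *ᵥ fun _ : Fin 1 => w t i) j) ^ 2)
      + (∫ t in (0 : ℝ)..T, ∑ i, ((Υ *ᵥ cw₁ t) i) ^ 2)
      ≤ γ ^ 2 * ((∑ i, ∫ t in (0 : ℝ)..T, ∑ j, (w₁ i t j) ^ 2)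
          + ∫ t in (0 : ℝ)..T, ∑ i, (cw₁ t i) ^ 2) := by
  classical
  have hγ2 : (0:ℝ) < γ ^ 2 := by positivity
  have hXsym : ∀ i, (X i)ᵀ = X i := fun i => by rw [← Matrix.conjTranspose_eq_transpose_of_trivial]; exact (hXpd i).1
  set s : Set ℝ := Set.Icc (0 : ℝ) T with hs
  have huIcc : Set.uIcc (0:ℝ) T = s := Set.uIcc_of_le hT
  -- continuity of trajectories
  have hxC : ∀ i, ContinuousOn (x i) s := fun i t ht => ((hx' i t ht).continuousAt).continuousWithinAt
  have hxCc : ∀ i j, ContinuousOn (fun t => x i t j) s :=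
    fun i j => (continuous_apply j).comp_continuousOn (hxC i)
  have hw₁Cc : ∀ i j, ContinuousOn (fun t => w₁ i t j) s :=
    fun i j => ((continuous_apply j).comp (hw₁ i)).continuousOn
  have hcwCc : ∀ k, ContinuousOn (fun t => cw₁ t k) s :=
    fun k => ((continuous_apply k).comp hcw₁).continuousOn
  have hzC : ∀ k, ContinuousOn (fun t => z t k) s := by
    intro k
    have : (fun t => z t k) = fun t => (C k *ᵥ x k t) 0 + (F₁ k *ᵥ w₁ k t) 0 := by
      funext t; rw [hz]; rfl
    rw [this]
    exact (contOn_entry (C k) (hxCc k) 0).add (contOn_entry (F₁ k) (hw₁Cc k) 0)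
  have hwC : ∀ i, ContinuousOn (fun t => w t i) s := by
    intro i
    have : (fun t => w t i) = fun t => (Υ *ᵥ z t) i := by funext t; rw [hw]
    rw [this]
    exact contOn_entry Υ hzC i
  -- continuity of the various integrands
  have hDc : ∀ i k, ContinuousOn
      (fun t => (A i *ᵥ x i t + B₁ i *ᵥ w₁ i t + B i *ᵥ fun _ : Fin 1 => w t i) k) s := by
    intro i k
    simp only [Pi.add_apply]
    exact ((contOn_entry (A i) (hxCc i) k).add (contOn_entry (B₁ i) (hw₁Cc i) k)).add
      (contOn_entry (B i) (fun _ => hwC i) k)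
  have hz₁c : ∀ i j, ContinuousOn
      (fun t => (C₁ i *ᵥ x i t + D₁ i *ᵥ w₁ i t + E₁ i *ᵥ fun _ : Fin 1 => w t i) j) s := by
    intro i j
    simp only [Pi.add_apply]
    exact ((contOn_entry (C₁ i) (hxCc i) j).add (contOn_entry (D₁ i) (hw₁Cc i) j)).add
      (contOn_entry (E₁ i) (fun _ => hwC i) j)
  have hΦ1c : ∀ i, ContinuousOn
      (fun t => ∑ j, ((C₁ i *ᵥ x i t + D₁ i *ᵥ w₁ i t + E₁ i *ᵥ fun _ : Fin 1 => w t i) j) ^ 2) s :=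
    fun i => continuousOn_finset_sum _ fun j _ => (hz₁c i j).pow 2
  have hΥc : ContinuousOn (fun t => ∑ k, ((Υ *ᵥ cw₁ t) k) ^ 2) s :=
    continuousOn_finset_sum _ fun k _ => (contOn_entry Υ hcwCc k).pow 2
  have hΨ1c : ∀ i, ContinuousOn (fun t => ∑ j, (w₁ i t j) ^ 2) s :=
    fun i => continuousOn_finset_sum _ fun j _ => (hw₁Cc i j).pow 2
  have hcwsq : ContinuousOn (fun t => ∑ k, (cw₁ t k) ^ 2) s :=
    continuousOn_finset_sum _ fun k _ => (hcwCc k).pow 2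
  have hGc : ContinuousOn (fun t => ∑ i, 2 *
      (x i t ⬝ᵥ (X i *ᵥ (A i *ᵥ x i t + B₁ i *ᵥ w₁ i t + B i *ᵥ fun _ : Fin 1 => w t i)))) s := by
    refine continuousOn_finset_sum _ fun i _ => continuousOn_const.mul ?_
    have : (fun t => x i t ⬝ᵥ (X i *ᵥ (A i *ᵥ x i t + B₁ i *ᵥ w₁ i t + B i *ᵥ fun _ : Fin 1 => w t i)))
        = fun t => ∑ j, x i t j *
          (X i *ᵥ (A i *ᵥ x i t + B₁ i *ᵥ w₁ i t + B i *ᵥ fun _ : Fin 1 => w t i)) j := by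
      funext t; rfl
    rw [this]
    exact continuousOn_finset_sum _ fun j _ =>
      (hxCc i j).mul (contOn_entry (X i) (hDc i) j)
  -- interval integrability
  have intΦ1 : ∀ i, IntervalIntegrable
      (fun t => ∑ j, ((C₁ i *ᵥ x i t + D₁ i *ᵥ w₁ i t + E₁ i *ᵥ fun _ : Fin 1 => w t i) j) ^ 2)
      MeasureTheory.volume 0 T := fun i => (huIcc ▸ (hΦ1c i)).intervalIntegrable
  have intΥ : IntervalIntegrable (fun t => ∑ k, ((Υ *ᵥ cw₁ t) k) ^ 2) MeasureTheory.volume 0 T :=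
    ContinuousOn.intervalIntegrable (by rw [huIcc]; exact hΥc)
  have intΨ1 : ∀ i, IntervalIntegrable (fun t => ∑ j, (w₁ i t j) ^ 2) MeasureTheory.volume 0 T :=
    fun i => (huIcc ▸ (hΨ1c i)).intervalIntegrable
  have intcw : IntervalIntegrable (fun t => ∑ k, (cw₁ t k) ^ 2) MeasureTheory.volume 0 T :=
    ContinuousOn.intervalIntegrable (by rw [huIcc]; exact hcwsq)
  have intG : IntervalIntegrable (fun t => ∑ i, 2 *
      (x i t ⬝ᵥ (X i *ᵥ (A i *ᵥ x i t + B₁ i *ᵥ w₁ i t + B i *ᵥ fun _ : Fin 1 => w t i))))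
      MeasureTheory.volume 0 T := ContinuousOn.intervalIntegrable (by rw [huIcc]; exact hGc)
  have intΦ1sum : IntervalIntegrable
      (fun t => ∑ i, ∑ j, ((C₁ i *ᵥ x i t + D₁ i *ᵥ w₁ i t + E₁ i *ᵥ fun _ : Fin 1 => w t i) j) ^ 2)
      MeasureTheory.volume 0 T :=
    ContinuousOn.intervalIntegrable (by rw [huIcc]; exact continuousOn_finset_sum _ fun i _ => hΦ1c i)
  have intΨ1sum : IntervalIntegrable (fun t => ∑ i, ∑ j, (w₁ i t j) ^ 2)
      MeasureTheory.volume 0 T :=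
    ContinuousOn.intervalIntegrable (by rw [huIcc]; exact continuousOn_finset_sum _ fun i _ => hΨ1c i)
  have intΦ : IntervalIntegrable
      (fun t => (∑ i, ∑ j, ((C₁ i *ᵥ x i t + D₁ i *ᵥ w₁ i t + E₁ i *ᵥ fun _ : Fin 1 => w t i) j) ^ 2)
        + ∑ k, ((Υ *ᵥ cw₁ t) k) ^ 2) MeasureTheory.volume 0 T := intΦ1sum.add intΥ
  have intΨ : IntervalIntegrable
      (fun t => (∑ i, ∑ j, (w₁ i t j) ^ 2) + ∑ k, (cw₁ t k) ^ 2) MeasureTheory.volume 0 T :=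
    intΨ1sum.add intcw
  -- the storage function and its derivative
  set V : ℝ → ℝ := fun t => ∑ i, x i t ⬝ᵥ (X i *ᵥ x i t) with hV
  have hVd : ∀ t ∈ s, HasDerivAt V (∑ i, 2 *
      (x i t ⬝ᵥ (X i *ᵥ (A i *ᵥ x i t + B₁ i *ᵥ w₁ i t + B i *ᵥ fun _ : Fin 1 => w t i)))) t := by
    intro t ht
    exact HasDerivAt.fun_sum fun i _ => hasDerivAt_quadForm (X i) (hXsym i) (hx' i t ht)
  have hftc : (∫ t in (0:ℝ)..T, ∑ i, 2 *
      (x i t ⬝ᵥ (X i *ᵥ (A i *ᵥ x i t + B₁ i *ᵥ w₁ i t + B i *ᵥ fun _ : Fin 1 => w t i))))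
      = V T - V 0 :=
    intervalIntegral.integral_eq_sub_of_hasDerivAt (fun t ht => hVd t (huIcc ▸ ht)) intG
  have hV0 : V 0 = 0 := by simp [hV, hx0]
  have hVT : 0 ≤ V T := Finset.sum_nonneg fun i _ => psd_quad_nonneg (hXpd i).posSemidef (x i T)
  -- pointwise dissipation inequality
  have key : ∀ t ∈ s,
      (1 / γ ^ 2) * ((∑ i, ∑ j, ((C₁ i *ᵥ x i t + D₁ i *ᵥ w₁ i t + E₁ i *ᵥ fun _ : Fin 1 => w t i) j) ^ 2)
          + ∑ k, ((Υ *ᵥ cw₁ t) k) ^ 2)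
        - ((∑ i, ∑ j, (w₁ i t j) ^ 2) + ∑ k, (cw₁ t k) ^ 2)
        + (∑ i, 2 * (x i t ⬝ᵥ (X i *ᵥ (A i *ᵥ x i t + B₁ i *ᵥ w₁ i t + B i *ᵥ fun _ : Fin 1 => w t i))))
        ≤ 0 := by
    intro t _
    have hag : ∀ i, 2 * (x i t ⬝ᵥ (X i *ᵥ (A i *ᵥ x i t + B₁ i *ᵥ w₁ i t + B i *ᵥ fun _ : Fin 1 => w t i)))
        + (1 / γ ^ 2) * ∑ j, ((C₁ i *ᵥ x i t + D₁ i *ᵥ w₁ i t + E₁ i *ᵥ fun _ : Fin 1 => w t i) j) ^ 2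
        - ∑ j, (w₁ i t j) ^ 2
        + Sum.elim (fun _ : Fin 1 => z t i) (fun _ : Fin 1 => w t i) ⬝ᵥ
          (Z i *ᵥ Sum.elim (fun _ : Fin 1 => z t i) (fun _ : Fin 1 => w t i)) ≤ 0 := by
      intro i
      have h := agent_diss hγ (A i) (B₁ i) (B i) (C₁ i) (D₁ i) (E₁ i) (C i) (F₁ i)
        (X i) (hXsym i) (Z i) (hLMI i) (x i t) (w₁ i t) (fun _ : Fin 1 => w t i)
      have hzi : (C i *ᵥ x i t + F₁ i *ᵥ w₁ i t) 0 = z t i := (hz t i).symm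
      simpa only [hzi] using h
    have hbig := Finset.sum_nonpos (fun i (_ : i ∈ Finset.univ) => hag i)
    rw [Finset.sum_add_distrib, Finset.sum_sub_distrib, Finset.sum_add_distrib] at hbig
    have hmi := hMIc (cw₁ t) (z t)
    have hneu := hneutral (z t)
    simp only [← hw t] at hmi hneu
    have hE1 : (∑ i, (1 / γ ^ 2) *
          ∑ j, ((C₁ i *ᵥ x i t + D₁ i *ᵥ w₁ i t + E₁ i *ᵥ fun _ : Fin 1 => w t i) j) ^ 2)
        = (1 / γ ^ 2) * ∑ i, ∑ j,
            ((C₁ i *ᵥ x i t + D₁ i *ᵥ w₁ i t + E₁ i *ᵥ fun _ : Fin 1 => w t i) j) ^ 2 :=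
      (Finset.mul_sum _ _ _).symm
    have hE2 : (1 / γ ^ 2) * ((∑ i, ∑ j, ((C₁ i *ᵥ x i t + D₁ i *ᵥ w₁ i t + E₁ i *ᵥ fun _ : Fin 1 => w t i) j) ^ 2)
          + ∑ k, ((Υ *ᵥ cw₁ t) k) ^ 2)
        = (1 / γ ^ 2) * (∑ i, ∑ j, ((C₁ i *ᵥ x i t + D₁ i *ᵥ w₁ i t + E₁ i *ᵥ fun _ : Fin 1 => w t i) j) ^ 2)
          + (1 / γ ^ 2) * ∑ k, ((Υ *ᵥ cw₁ t) k) ^ 2 := mul_add _ _ _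
    linarith
  -- integrate the dissipation inequality
  have key' : ∀ t ∈ s,
      ((∑ i, ∑ j, ((C₁ i *ᵥ x i t + D₁ i *ᵥ w₁ i t + E₁ i *ᵥ fun _ : Fin 1 => w t i) j) ^ 2)
          + ∑ k, ((Υ *ᵥ cw₁ t) k) ^ 2)
        - γ ^ 2 * ((∑ i, ∑ j, (w₁ i t j) ^ 2) + ∑ k, (cw₁ t k) ^ 2)
        + γ ^ 2 * (∑ i, 2 * (x i t ⬝ᵥ (X i *ᵥ (A i *ᵥ x i t + B₁ i *ᵥ w₁ i t + B i *ᵥ fun _ : Fin 1 => w t i))))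
        ≤ 0 := fun t ht => scale_ineq hγ2 (key t ht)
  have hmono : (∫ t in (0:ℝ)..T,
      (((∑ i, ∑ j, ((C₁ i *ᵥ x i t + D₁ i *ᵥ w₁ i t + E₁ i *ᵥ fun _ : Fin 1 => w t i) j) ^ 2)
          + ∑ k, ((Υ *ᵥ cw₁ t) k) ^ 2)
        - γ ^ 2 * ((∑ i, ∑ j, (w₁ i t j) ^ 2) + ∑ k, (cw₁ t k) ^ 2)
        + γ ^ 2 * (∑ i, 2 * (x i t ⬝ᵥ (X i *ᵥ (A i *ᵥ x i t + B₁ i *ᵥ w₁ i t + B i *ᵥ fun _ : Fin 1 => w t i))))))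
      ≤ ∫ _t in (0:ℝ)..T, (0:ℝ) := by
    refine intervalIntegral.integral_mono_on hT ?_ intervalIntegrable_const key'
    exact (intΦ.sub (intΨ.const_mul _)).add (intG.const_mul _)
  rw [intervalIntegral.integral_add (intΦ.sub (intΨ.const_mul _)) (intG.const_mul _),
    intervalIntegral.integral_sub intΦ (intΨ.const_mul _),
    intervalIntegral.integral_const_mul, intervalIntegral.integral_const_mul,
    hftc, hV0, intervalIntegral.integral_zero] at hmono
  -- split integrals of sums
  have hsplitΦ : (∫ t in (0:ℝ)..T,
      ((∑ i, ∑ j, ((C₁ i *ᵥ x i t + D₁ i *ᵥ w₁ i t + E₁ i *ᵥ fun _ : Fin 1 => w t i) j) ^ 2)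
        + ∑ k, ((Υ *ᵥ cw₁ t) k) ^ 2))
      = (∑ i, ∫ t in (0:ℝ)..T,
          ∑ j, ((C₁ i *ᵥ x i t + D₁ i *ᵥ w₁ i t + E₁ i *ᵥ fun _ : Fin 1 => w t i) j) ^ 2)
        + ∫ t in (0:ℝ)..T, ∑ k, ((Υ *ᵥ cw₁ t) k) ^ 2 := by
    rw [intervalIntegral.integral_add intΦ1sum intΥ,
      intervalIntegral.integral_finset_sum (fun i _ => intΦ1 i)]
  have hsplitΨ : (∫ t in (0:ℝ)..T, ((∑ i, ∑ j, (w₁ i t j) ^ 2) + ∑ k, (cw₁ t k) ^ 2))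
      = (∑ i, ∫ t in (0:ℝ)..T, ∑ j, (w₁ i t j) ^ 2) + ∫ t in (0:ℝ)..T, ∑ k, (cw₁ t k) ^ 2 := by
    rw [intervalIntegral.integral_add intΨ1sum intcw,
      intervalIntegral.integral_finset_sum (fun i _ => intΨ1 i)]
  rw [hsplitΦ, hsplitΨ] at hmono
  have hVT' : 0 ≤ γ ^ 2 * V T := mul_nonneg hγ2.le hVT
  linarith
end
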